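/- arXiv:2506.16640 — 6 statements merged into one kernel-verified Lean document; each statement's English description precedes it below -/
import Mathlib

section
/- For every real α > 1, every integer n ≥ 1, and every vector z ∈ ℝⁿ, there exists a unique τ ∈ ℝ such that Σ_{i=1}^{n} (max((α−1)·z_i − τ, 0))^{1/(α−1)} = 1. -/
/-!
Each summand `max (c i - τ) 0 ^ q` is continuous and antitone in `τ`, and strictly decreasing
while positive; so the sum is continuous, vanishes for `τ ≥ max c`, and is strictly decreasing
wherever it is positive. It exceeds any `t > 0` at `τ = max c - t ^ q⁻¹`, so the intermediate
value theorem gives a root of `sum = t`, and strict decrease on the positive range makes it unique.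
-/

open Finset

section

variable {ι : Type*} [Fintype ι] (c : ι → ℝ) {q : ℝ}

lemma continuous_sum_max_sub_rpow (hq : 0 ≤ q) :
    Continuous fun τ => ∑ i, (max (c i - τ) 0) ^ q :=
  continuous_finsetSum _ fun _ _ =>
    ((continuous_const.sub continuous_id).max continuous_const).rpow_const fun _ => Or.inr hq

lemma sum_max_sub_rpow_eq_zero (hq : 0 < q) {τ : ℝ} (h : ∀ i, c i ≤ τ) :
    ∑ i, (max (c i - τ) 0) ^ q = 0 :=
  sum_eq_zero fun i _ => by
    rw [max_eq_right (sub_nonpos.2 (h i)), Real.zero_rpow hq.ne']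

lemma le_sum_max_sub_rpow (hq : q ≠ 0) (i : ι) {t : ℝ} (ht : 0 ≤ t) :
    t ≤ ∑ j, (max (c j - (c i - t ^ q⁻¹)) 0) ^ q := by
  have hterm : (max (c i - (c i - t ^ q⁻¹)) 0) ^ q = t := by
    rw [sub_sub_cancel, max_eq_left (Real.rpow_nonneg ht _), Real.rpow_inv_rpow ht hq]
  calc t = (max (c i - (c i - t ^ q⁻¹)) 0) ^ q := hterm.symm
    _ ≤ _ := single_le_sum (f := fun j => (max (c j - (c i - t ^ q⁻¹)) 0) ^ q)
      (fun j _ => Real.rpow_nonneg (le_max_right _ _) _) (mem_univ i)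

lemma sum_max_sub_rpow_lt_of_lt (hq : 0 < q) {a b : ℝ} (hab : a < b)
    (hb : 0 < ∑ i, (max (c i - b) 0) ^ q) :
    ∑ i, (max (c i - b) 0) ^ q < ∑ i, (max (c i - a) 0) ^ q := by
  obtain ⟨i, hi⟩ : ∃ i, b < c i := by
    by_contra! h
    exact hb.ne' (sum_max_sub_rpow_eq_zero c hq h)
  refine sum_lt_sum (fun j _ => ?_) ⟨i, mem_univ i, ?_⟩
  · exact Real.rpow_le_rpow (le_max_right _ _) (max_le_max (by linarith) le_rfl) hq.le
  · rw [max_eq_left (by linarith), max_eq_left (by linarith)]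
    exact Real.rpow_lt_rpow (by linarith) (by linarith) hq

theorem existsUnique_sum_max_sub_rpow_eq [Nonempty ι] (hq : 0 < q) {t : ℝ} (ht : 0 < t) :
    ∃! τ, ∑ i, (max (c i - τ) 0) ^ q = t := by
  obtain ⟨i₀, hi₀⟩ := Finite.exists_max c
  have hlow : t ∈ Set.Icc (∑ i, (max (c i - c i₀) 0) ^ q)
      (∑ i, (max (c i - (c i₀ - t ^ q⁻¹)) 0) ^ q) :=
    ⟨(sum_max_sub_rpow_eq_zero c hq hi₀).trans_le ht.le, le_sum_max_sub_rpow c hq.ne' i₀ ht.le⟩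
  obtain ⟨τ, -, hτ : ∑ i, (max (c i - τ) 0) ^ q = t⟩ := intermediate_value_Icc'
    (sub_le_self _ (Real.rpow_nonneg ht.le _)) (continuous_sum_max_sub_rpow c hq.le).continuousOn
    hlow
  refine ⟨τ, hτ, fun σ hσ => ?_⟩
  by_contra hne
  rcases lt_or_gt_of_ne hne with h | h
  · exact (sum_max_sub_rpow_lt_of_lt c hq h (hτ ▸ ht)).ne (hτ.trans hσ.symm)
  · exact (sum_max_sub_rpow_lt_of_lt c hq h (hσ ▸ ht)).ne (hσ.trans hτ.symm)

end

/-- For every real `α > 1`, every `n ≥ 1`, and every `z : ℝⁿ`, there exists a unique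
threshold `τ` such that `∑ i, (max ((α−1)·z i − τ) 0) ^ (1/(α−1)) = 1`. -/
theorem entmax_threshold_existsUnique
    (α : ℝ) (hα : 1 < α) (n : ℕ) (hn : 1 ≤ n) (z : Fin n → ℝ) :
    ∃! τ : ℝ, ∑ i, (max ((α - 1) * z i - τ) 0) ^ ((1 : ℝ) / (α - 1)) = 1 := by
  have : Nonempty (Fin n) := ⟨⟨0, hn⟩⟩
  have hq : 0 < (1 : ℝ) / (α - 1) := one_div_pos.2 (sub_pos.2 hα)
  exact existsUnique_sum_max_sub_rpow_eq (fun i => (α - 1) * z i) hq one_pos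
end

section
/- Let α > 1, let a_1, …, a_{n−1}, b, c ∈ ℝ, and set x = (a_1, …, a_{n−1}, c) ∈ ℝⁿ and x* = (a_1, …, a_{n−1}, b, c) ∈ ℝ^{n+1} (x* is x with the entry b inserted just before the last entry). Then α-entmax(x)_n ≥ α-entmax(x*)_{n+1}: inserting a new token can never increase the α-entmax probability of the last token. -/
/-!
The entmax weight of a fixed logit is antitone in the threshold. If `τ ≤ τs` this already
compares the weights of `c`. Otherwise every old token gets at least as much weight under `τs`
as under `τ`, and the inserted token gets a nonnegative weight, so normalization leaves at most
as much for `c`.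
-/

/-- The coordinate value of `α`-entmax with threshold `τ` at a logit `x`. -/
noncomputable def entmaxTerm (α τ x : ℝ) : ℝ :=
  (max ((α - 1) * x - τ) 0) ^ ((1 : ℝ) / (α - 1))

lemma entmaxTerm_nonneg (α τ x : ℝ) : 0 ≤ entmaxTerm α τ x :=
  Real.rpow_nonneg (le_max_right _ _) _

lemma entmaxTerm_antitone {α : ℝ} (hα : 1 ≤ α) (x : ℝ) :
    Antitone fun τ => entmaxTerm α τ x := fun _ _ hτ =>
  Real.rpow_le_rpow (le_max_right _ _) (max_le_max (by linarith) le_rfl)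
    (one_div_nonneg.mpr (sub_nonneg.mpr hα))

/-- Inserting a new token just before the last entry can never increase the
`α`-entmax probability of the last token. Here `x = (a_1, …, a_m, c)` and
`x* = (a_1, …, a_m, b, c)`, and `τ`, `τs` are their respective (unique) entmax
thresholds, characterized by the normalization hypotheses. -/
theorem entmax_insert_nonincreasing
    (α : ℝ) (hα : 1 < α) (m : ℕ) (a : Fin m → ℝ) (b c : ℝ) (τ τs : ℝ)
    (hτ : ∑ i, entmaxTerm α τ ((Fin.snoc a c : Fin (m + 1) → ℝ) i) = 1)
    (hτs : ∑ i, entmaxTerm α τs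
      ((Fin.snoc (Fin.snoc a b : Fin (m + 1) → ℝ) c : Fin (m + 2) → ℝ) i) = 1) :
    entmaxTerm α τs c ≤ entmaxTerm α τ c := by
  simp only [Fin.sum_univ_castSucc, Fin.snoc_castSucc, Fin.snoc_last] at hτ hτs
  rcases le_total τ τs with hle | hle
  · exact entmaxTerm_antitone hα.le c hle
  · have hsum : ∑ i, entmaxTerm α τ (a i) ≤ ∑ i, entmaxTerm α τs (a i) :=
      Finset.sum_le_sum fun i _ => entmaxTerm_antitone hα.le (a i) hle
    linarith [entmaxTerm_nonneg α τs b]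
end

section
/- Let α > 1, let x = (a_1, …, a_{n−1}, c) ∈ ℝⁿ, and let τ(x) denote its α-entmax threshold. Set b_max = τ(x)/(α−1). Then for every b ≤ b_max, the extended vector x* = (a_1, …, a_{n−1}, b, c) ∈ ℝ^{n+1} satisfies τ(x*) = τ(x), α-entmax(x*)_n = 0 (the inserted token receives exactly zero probability), α-entmax(x*)_i = α-entmax(x)_i for all i ≤ n−1, and α-entmax(x*)_{n+1} = α-entmax(x)_n. -/
lemma Fin.sum_comp_snoc {M β : Type*} [AddCommMonoid M] {n : ℕ} (f : β → M) (a : Fin n → β)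
    (c : β) : ∑ i, f ((Fin.snoc a c : Fin (n + 1) → β) i) = ∑ i, f (a i) + f c := by
  simp [Fin.sum_univ_castSucc]

lemma entmaxTerm_eq_zero {α τ x : ℝ} (hα : α ≠ 1) (h : (α - 1) * x ≤ τ) :
    entmaxTerm α τ x = 0 := by
  rw [entmaxTerm, max_eq_right (by linarith), Real.zero_rpow]
  exact one_div_ne_zero (sub_ne_zero.mpr hα)

lemma entmaxTerm_anti {α : ℝ} (hα : 1 ≤ α) {t s : ℝ} (h : t ≤ s) (x : ℝ) :
    entmaxTerm α s x ≤ entmaxTerm α t x :=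
  Real.rpow_le_rpow (le_max_right _ _) (max_le_max (by linarith) le_rfl)
    (one_div_nonneg.mpr (sub_nonneg.mpr hα))

lemma entmaxTerm_lt_of_lt {α : ℝ} (hα : 1 < α) {t s x : ℝ} (h : t < s)
    (hpos : 0 < entmaxTerm α s x) : entmaxTerm α s x < entmaxTerm α t x := by
  have hsupp : s < (α - 1) * x := by
    by_contra! hle
    exact hpos.ne' (entmaxTerm_eq_zero hα.ne' hle)
  unfold entmaxTerm
  rw [max_eq_left (by linarith), max_eq_left (by linarith)]
  exact Real.rpow_lt_rpow (by linarith) (by linarith) (one_div_pos.mpr (sub_pos.mpr hα))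

lemma sum_entmaxTerm_lt_of_lt {ι : Type*} [Fintype ι] {α : ℝ} (hα : 1 < α) (z : ι → ℝ)
    {t s : ℝ} (h : t < s) (hpos : 0 < ∑ i, entmaxTerm α s (z i)) :
    ∑ i, entmaxTerm α s (z i) < ∑ i, entmaxTerm α t (z i) := by
  obtain ⟨j, -, hj⟩ := Finset.exists_lt_of_sum_lt (f := fun _ ↦ (0 : ℝ)) (by simpa using hpos)
  exact Finset.sum_lt_sum (fun i _ ↦ entmaxTerm_anti hα.le h.le (z i))
    ⟨j, Finset.mem_univ j, entmaxTerm_lt_of_lt hα h hj⟩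

theorem entmax_threshold_unique {ι : Type*} [Fintype ι] {α : ℝ} (hα : 1 < α) (z : ι → ℝ)
    {t s : ℝ} (ht : ∑ i, entmaxTerm α t (z i) = 1) (hs : ∑ i, entmaxTerm α s (z i) = 1) :
    t = s := by
  rcases lt_trichotomy t s with h | h | h
  · have := sum_entmaxTerm_lt_of_lt hα z h (by rw [hs]; exact one_pos)
    linarith
  · exact h
  · have := sum_entmaxTerm_lt_of_lt hα z h (by rw [ht]; exact one_pos)
    linarith

/-- If the inserted entry `b` satisfies `b ≤ τ(x)/(α−1)`, then inserting it just before the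
last entry leaves the threshold unchanged (`τ(x*) = τ(x)`), the inserted token gets exactly
zero probability, and all other coordinates keep their `α`-entmax probabilities. Here
`x = (a_1, …, a_m, c)`, `x* = (a_1, …, a_m, b, c)`, and `τ`, `τs` are their respective
(unique) entmax thresholds, characterized by the normalization hypotheses. -/
theorem entmax_insert_below_bmax
    (α : ℝ) (hα : 1 < α) (m : ℕ) (a : Fin m → ℝ) (b c : ℝ) (τ τs : ℝ)
    (hτ : ∑ i, entmaxTerm α τ ((Fin.snoc a c : Fin (m + 1) → ℝ) i) = 1)
    (hb : b ≤ τ / (α - 1))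
    (hτs : ∑ i, entmaxTerm α τs
      ((Fin.snoc (Fin.snoc a b : Fin (m + 1) → ℝ) c : Fin (m + 2) → ℝ) i) = 1) :
    τs = τ ∧
    entmaxTerm α τs b = 0 ∧
    (∀ i : Fin m, entmaxTerm α τs (a i) = entmaxTerm α τ (a i)) ∧
    entmaxTerm α τs c = entmaxTerm α τ c := by
  have hb0 : entmaxTerm α τ b = 0 :=
    entmaxTerm_eq_zero hα.ne' ((le_div_iff₀' (sub_pos.mpr hα)).mp hb)
  have hτ' : ∑ i, entmaxTerm α τ
      ((Fin.snoc (Fin.snoc a b : Fin (m + 1) → ℝ) c : Fin (m + 2) → ℝ) i) = 1 := by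
    rw [Fin.sum_comp_snoc, Fin.sum_comp_snoc, hb0, add_zero, ← Fin.sum_comp_snoc, hτ]
  obtain rfl := entmax_threshold_unique hα _ hτs hτ'
  exact ⟨rfl, hb0, fun _ => rfl, rfl⟩
end

section
/- Let α > 1, let m > 0 be an ALiBi slope, let i ≥ 1, and suppose the raw attention logits of query i satisfy z_j ∈ [z_min, z_max] for every key position j ∈ {1, …, i}. Define the biased logits c_j = z_j + m·(j − i). Then every position j with i − j > (z_max − z_min + 1/(α−1))/m satisfies α-entmax(c)_j = 0; in particular, any token at distance greater than d_max = ⌊(z_max − z_min + 1/(α−1))/m + 1⌋ from the query receives exactly zero attention under α-entmax with ALiBi bias. -/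
section Entmax

variable {α τ : ℝ}

lemma entmaxTerm_eq_zero_of_le (hα : α ≠ 1) {x : ℝ} (h : (α - 1) * x ≤ τ) :
    entmaxTerm α τ x = 0 := by
  rw [entmaxTerm, max_eq_right (by linarith), Real.zero_rpow]
  exact one_div_ne_zero (sub_ne_zero.mpr hα)

lemma sub_le_one_of_entmaxTerm_le_one (hα : 1 < α) {x : ℝ} (h : entmaxTerm α τ x ≤ 1) :
    (α - 1) * x - τ ≤ 1 := by
  by_contra! hlt
  have hexp : 0 < 1 / (α - 1) := one_div_pos.mpr (sub_pos.mpr hα)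
  have : 1 < entmaxTerm α τ x := by
    rw [entmaxTerm, max_eq_left (by linarith)]
    exact Real.one_lt_rpow hlt hexp
  linarith

lemma entmaxTerm_eq_zero_of_add_le {ι : Type*} {s : Finset ι} {c : ι → ℝ} (hα : 1 < α)
    (hτ : ∑ j ∈ s, entmaxTerm α τ (c j) = 1) {j k : ι} (hj : j ∈ s)
    (hkj : c k + 1 / (α - 1) ≤ c j) : entmaxTerm α τ (c k) = 0 := by
  have hle : entmaxTerm α τ (c j) ≤ 1 :=
    hτ ▸ Finset.single_le_sum (fun j _ ↦ entmaxTerm_nonneg α τ (c j)) hj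
  have hτj := sub_le_one_of_entmaxTerm_le_one hα hle
  have hα1 : 0 < α - 1 := sub_pos.mpr hα
  apply entmaxTerm_eq_zero_of_le hα.ne'
  calc (α - 1) * c k = (α - 1) * (c k + 1 / (α - 1)) - 1 := by field_simp; ring
    _ ≤ (α - 1) * c j - 1 := by gcongr
    _ ≤ τ := by linarith

end Entmax

theorem entmax_alibi_hard_window_general
    (α : ℝ) (hα : 1 < α) (m : ℝ) (hm : 0 < m)
    (i : ℕ)
    (z : Fin i → ℝ) (zmin zmax : ℝ)
    (hz : ∀ j, zmin ≤ z j ∧ z j ≤ zmax)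
    (τ : ℝ)
    (hτ : ∑ j : Fin i, entmaxTerm α τ (z j + m * (((j : ℕ) + 1 : ℝ) - i)) = 1) :
    (∀ j : Fin i, (zmax - zmin + 1 / (α - 1)) / m < (i : ℝ) - ((j : ℕ) + 1) →
      entmaxTerm α τ (z j + m * (((j : ℕ) + 1 : ℝ) - i)) = 0) ∧
    (∀ j : Fin i, ((⌊(zmax - zmin + 1 / (α - 1)) / m + 1⌋ : ℤ) : ℝ) < (i : ℝ) - ((j : ℕ) + 1) →
      entmaxTerm α τ (z j + m * (((j : ℕ) + 1 : ℝ) - i)) = 0) := by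
  have window : ∀ j : Fin i, (zmax - zmin + 1 / (α - 1)) / m < (i : ℝ) - ((j : ℕ) + 1) →
      entmaxTerm α τ (z j + m * (((j : ℕ) + 1 : ℝ) - i)) = 0 := by
    intro j hj
    have hi : 1 ≤ i := Nat.one_le_of_lt j.isLt
    let last : Fin i := ⟨i - 1, Nat.sub_one_lt_of_lt j.isLt⟩
    refine entmaxTerm_eq_zero_of_add_le (c := fun j : Fin i ↦ z j + m * (((j : ℕ) + 1 : ℝ) - i))
      hα hτ (Finset.mem_univ last) ?_
    have hbias : (((last : ℕ) + 1 : ℝ) - i) = 0 := by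
      simp [last, Nat.cast_sub hi]
    have hdist : zmax - zmin + 1 / (α - 1) < m * ((i : ℝ) - ((j : ℕ) + 1)) := by
      rwa [div_lt_iff₀' hm] at hj
    simp only [hbias, mul_zero, add_zero]
    linarith [(hz j).2, (hz last).1]
  refine ⟨window, fun j hj ↦ window j (lt_trans ?_ hj)⟩
  rw [Int.floor_add_one, Int.cast_add, Int.cast_one]
  exact Int.lt_floor_add_one _

/-- ALiBi with `α`-entmax creates a hard attention window. Key positions `1, …, i` are
represented by `j : Fin i` at position `j+1`, with biased logits `c_j = z_j + m·((j+1) − i)`.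
If the raw logits lie in `[z_min, z_max]`, then every position at distance greater than
`(z_max − z_min + 1/(α−1))/m` from the query — in particular, at distance greater than
`d_max = ⌊(z_max − z_min + 1/(α−1))/m + 1⌋` — receives exactly zero attention. -/
theorem entmax_alibi_hard_window
    (α : ℝ) (hα : 1 < α) (m : ℝ) (hm : 0 < m)
    (i : ℕ) (hi : 1 ≤ i)
    (z : Fin i → ℝ) (zmin zmax : ℝ)
    (hz : ∀ j, zmin ≤ z j ∧ z j ≤ zmax)
    (τ : ℝ)
    (hτ : ∑ j : Fin i, entmaxTerm α τ (z j + m * (((j : ℕ) + 1 : ℝ) - i)) = 1) :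
    (∀ j : Fin i, (zmax - zmin + 1 / (α - 1)) / m < (i : ℝ) - ((j : ℕ) + 1) →
      entmaxTerm α τ (z j + m * (((j : ℕ) + 1 : ℝ) - i)) = 0) ∧
    (∀ j : Fin i, ((⌊(zmax - zmin + 1 / (α - 1)) / m + 1⌋ : ℤ) : ℝ) < (i : ℝ) - ((j : ℕ) + 1) →
      entmaxTerm α τ (z j + m * (((j : ℕ) + 1 : ℝ) - i)) = 0) :=
  entmax_alibi_hard_window_general α hα m hm i z zmin zmax hz τ hτ
end

section
/- For each integer n ≥ 2, let v ∈ ℝⁿ have v_j = 0 for j < n and v_n = √(1/2), and let v* ∈ ℝ^{n+1} have v*_j = 0 for j < n and v*_n = v*_{n+1} = √(1/2). Define the attention logits z ∈ ℝⁿ by z_j = v_n · v_j (so z = (0, …, 0, 1/2)) and z* ∈ ℝ^{n+1} by z*_j = v*_{n+1} · v*_j (so z* = (0, …, 0, 1/2, 1/2)), and define the one-layer attention outputs r_n = Σ_{j=1}^{n} sparsemax(z)_j · v_j and r*_{n+1} = Σ_{j=1}^{n+1} sparsemax(z*)_j · v*_j. Then sparsemax(z*) = (0, …, 0, 1/2,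 1/2), hence r*_{n+1} = √(1/2), all coordinates of sparsemax(z) are strictly positive, and lim_{n→∞} |r_n − r*_{n+1}| = (1/2)·√(1/2) > 0. In particular the representation difference remains bounded away from zero as n → ∞, so sparse attention does not suffer representational collapse on this construction. -/
/-!
The logits are `z = (0, …, 0, 1/2)` and `z* = (0, …, 0, 1/2, 1/2)`. Normalisation pins down the
thresholds: `τ* = 0`, because the two entries `1/2` already carry mass one, while
`τ = -1/(2(m+1))`, which is negative (so every coordinate of `sparsemax z` is positive) and tends
to `0`. The outputs are `r* = √(1/2)` and `r = (1/2 - τ)·√(1/2)`, so `|r - r*| → (1/2)·√(1/2)`.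
-/

/-- The value vector `v ∈ ℝ^{m+1}`: zeros followed by a final entry `√(1/2)`.
(The paper's `n` corresponds to `m + 1` with `m ≥ 1`.) -/
noncomputable def vVec (m : ℕ) : Fin (m + 1) → ℝ :=
  Fin.snoc (fun _ => 0) (Real.sqrt (1 / 2))

/-- The extended value vector `v* ∈ ℝ^{m+2}`: zeros followed by two entries `√(1/2)`. -/
noncomputable def vStar (m : ℕ) : Fin (m + 2) → ℝ :=
  Fin.snoc (vVec m) (Real.sqrt (1 / 2))

/-- The attention logits `z_j = v_last · v_j`, i.e. `z = (0, …, 0, 1/2)`. -/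
noncomputable def zVec (m : ℕ) : Fin (m + 1) → ℝ :=
  fun j => vVec m (Fin.last m) * vVec m j

/-- The extended attention logits `z*_j = v*_last · v*_j`, i.e. `z* = (0, …, 0, 1/2, 1/2)`. -/
noncomputable def zStar (m : ℕ) : Fin (m + 2) → ℝ :=
  fun j => vStar m (Fin.last (m + 1)) * vStar m j

/-- Sparsemax coordinate (α = 2): `max (x − τ) 0`. -/
noncomputable def sparsemaxTerm (τ x : ℝ) : ℝ := max (x - τ) 0

open Filter Topology

lemma sqrt_half_mul_self : Real.sqrt (1 / 2) * Real.sqrt (1 / 2) = 1 / 2 :=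
  Real.mul_self_sqrt (by norm_num)

section Vectors

variable (m : ℕ)

@[simp] lemma vVec_castSucc (j : Fin m) : vVec m j.castSucc = 0 := by
  simp [vVec]

@[simp] lemma vVec_last : vVec m (Fin.last m) = Real.sqrt (1 / 2) := by
  simp [vVec]

@[simp] lemma vStar_castSucc (j : Fin (m + 1)) : vStar m j.castSucc = vVec m j := by
  simp [vStar]

@[simp] lemma vStar_last : vStar m (Fin.last (m + 1)) = Real.sqrt (1 / 2) := by
  simp [vStar]

@[simp] lemma zVec_castSucc (j : Fin m) : zVec m j.castSucc = 0 := by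
  simp [zVec]

@[simp] lemma zVec_last : zVec m (Fin.last m) = 1 / 2 := by
  rw [zVec, vVec_last, sqrt_half_mul_self]

@[simp] lemma zStar_castSucc (j : Fin (m + 1)) : zStar m j.castSucc = zVec m j := by
  simp [zStar, zVec]

@[simp] lemma zStar_last : zStar m (Fin.last (m + 1)) = 1 / 2 := by
  rw [zStar, vStar_last, sqrt_half_mul_self]

lemma zVec_nonneg (j : Fin (m + 1)) : 0 ≤ zVec m j := by
  induction j using Fin.lastCases <;> simp

lemma zStar_apply (j : Fin (m + 2)) : zStar m j = if m ≤ (j : ℕ) then 1 / 2 else 0 := by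
  induction j using Fin.lastCases with
  | last => simp
  | cast i =>
    induction i using Fin.lastCases with
    | last => simp
    | cast k => simp [k.is_lt.not_ge]

lemma zStar_nonneg (j : Fin (m + 2)) : 0 ≤ zStar m j := by
  rw [zStar_apply]
  positivity

end Vectors

lemma sparsemaxTerm_zero_of_nonneg {x : ℝ} (hx : 0 ≤ x) : sparsemaxTerm 0 x = x := by
  simp [sparsemaxTerm, hx]

lemma sparsemaxTerm_pos_of_lt {τ x : ℝ} (h : τ < x) : 0 < sparsemaxTerm τ x :=
  lt_max_of_lt_left (sub_pos.mpr h)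

section Sums

variable (m : ℕ) (t : ℝ)

lemma sum_sparsemaxTerm_zVec :
    ∑ j, sparsemaxTerm t (zVec m j) = m * max (-t) 0 + max (1 / 2 - t) 0 := by
  simp [Fin.sum_univ_castSucc, sparsemaxTerm]

lemma sum_sparsemaxTerm_zStar :
    ∑ j, sparsemaxTerm t (zStar m j) = m * max (-t) 0 + 2 * max (1 / 2 - t) 0 := by
  rw [Fin.sum_univ_castSucc]
  simp only [zStar_castSucc, zStar_last]
  rw [sum_sparsemaxTerm_zVec, sparsemaxTerm]
  ring

lemma sum_sparsemaxTerm_zVec_mul_vVec :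
    ∑ j, sparsemaxTerm t (zVec m j) * vVec m j = max (1 / 2 - t) 0 * Real.sqrt (1 / 2) := by
  simp [Fin.sum_univ_castSucc, sparsemaxTerm]

lemma sum_sparsemaxTerm_zStar_mul_vStar :
    ∑ j, sparsemaxTerm t (zStar m j) * vStar m j =
      2 * max (1 / 2 - t) 0 * Real.sqrt (1 / 2) := by
  rw [Fin.sum_univ_castSucc]
  simp only [zStar_castSucc, vStar_castSucc, zStar_last, vStar_last]
  rw [sum_sparsemaxTerm_zVec_mul_vVec, sparsemaxTerm]
  ring

end Sums

lemma threshold_zVec_eq {m : ℕ} {t : ℝ} (h : ∑ j, sparsemaxTerm t (zVec m j) = 1) :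
    t = -1 / (2 * (m + 1)) := by
  rw [sum_sparsemaxTerm_zVec] at h
  rcases le_or_gt 0 t with ht | ht
  · have : max (1 / 2 - t) 0 ≤ 1 / 2 := max_le (by linarith) (by norm_num)
    rw [max_eq_right (by linarith)] at h
    linarith
  · rw [max_eq_left (by linarith), max_eq_left (by linarith)] at h
    field_simp
    linarith

lemma threshold_zStar_eq {m : ℕ} {t : ℝ} (h : ∑ j, sparsemaxTerm t (zStar m j) = 1) :
    t = 0 := by
  rw [sum_sparsemaxTerm_zStar] at h
  rcases lt_trichotomy t 0 with ht | ht | ht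
  · rw [max_eq_left (by linarith), max_eq_left (by linarith)] at h
    nlinarith [(Nat.cast_nonneg m : (0 : ℝ) ≤ m)]
  · exact ht
  · have : max (1 / 2 - t) 0 < 1 / 2 := max_lt (by linarith) (by norm_num)
    rw [max_eq_right (by linarith)] at h
    linarith

lemma threshold_zVec_neg {m : ℕ} {t : ℝ} (h : ∑ j, sparsemaxTerm t (zVec m j) = 1) : t < 0 := by
  rw [threshold_zVec_eq h, neg_div]
  exact neg_neg_of_pos (by positivity)

lemma tendsto_neg_one_div_two_mul_succ :
    Tendsto (fun m : ℕ => -1 / (2 * ((m : ℝ) + 1))) atTop (𝓝 0) := by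
  have h := (tendsto_one_div_add_atTop_nhds_zero_nat (𝕜 := ℝ)).const_mul (-1 / 2)
  rw [mul_zero] at h
  refine h.congr fun m => ?_
  field_simp

lemma tendsto_abs_max_half_sub_mul_sqrt_half_sub {τ : ℕ → ℝ} (hτ : Tendsto τ atTop (𝓝 0)) :
    Tendsto (fun m => |max (1 / 2 - τ m) 0 * Real.sqrt (1 / 2) - Real.sqrt (1 / 2)|) atTop
      (𝓝 (1 / 2 * Real.sqrt (1 / 2))) := by
  have hlim := ((((tendsto_const_nhds (x := (1 / 2 : ℝ))).sub hτ).max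
    (tendsto_const_nhds (x := (0 : ℝ)))).mul_const (Real.sqrt (1 / 2))).sub_const
    (Real.sqrt (1 / 2)) |>.abs
  convert hlim using 2
  rw [sub_zero, max_eq_left (by norm_num), show 1 / 2 * Real.sqrt (1 / 2) - Real.sqrt (1 / 2) =
    -(1 / 2 * Real.sqrt (1 / 2)) by ring, abs_neg, abs_of_nonneg (by positivity)]

/-- Counterexample to representational collapse with sparsemax: with
`v = (0, …, 0, √(1/2)) ∈ ℝ^{m+1}` and `v* = (0, …, 0, √(1/2), √(1/2)) ∈ ℝ^{m+2}`,
logits `z = (0, …, 0, 1/2)` and `z* = (0, …, 0, 1/2, 1/2)`, and sparsemax thresholds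
`τ m` and `τs m` (characterized by normalization), the sparsemax of `z*` is
`(0, …, 0, 1/2, 1/2)`, hence the extended attention output `r*` equals `√(1/2)`; all
coordinates of `sparsemax(z)` are strictly positive; and the representation difference
`|r_m − r*_m|` tends to `(1/2)·√(1/2) > 0` as `m → ∞`. -/
theorem sparsemax_no_representational_collapse
    (τ τs : ℕ → ℝ)
    (hτ : ∀ m, 1 ≤ m → ∑ j, sparsemaxTerm (τ m) (zVec m j) = 1)
    (hτs : ∀ m, 1 ≤ m → ∑ j, sparsemaxTerm (τs m) (zStar m j) = 1) :
    (∀ m, 1 ≤ m → ∀ j : Fin (m + 2),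
      sparsemaxTerm (τs m) (zStar m j) = if m ≤ (j : ℕ) then 1 / 2 else 0) ∧
    (∀ m, 1 ≤ m →
      ∑ j, sparsemaxTerm (τs m) (zStar m j) * vStar m j = Real.sqrt (1 / 2)) ∧
    (∀ m, 1 ≤ m → ∀ j : Fin (m + 1), 0 < sparsemaxTerm (τ m) (zVec m j)) ∧
    Filter.Tendsto
      (fun m : ℕ =>
        |(∑ j, sparsemaxTerm (τ m) (zVec m j) * vVec m j) -
          ∑ j, sparsemaxTerm (τs m) (zStar m j) * vStar m j|)
      Filter.atTop (nhds ((1 / 2) * Real.sqrt (1 / 2))) ∧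
    0 < (1 / 2 : ℝ) * Real.sqrt (1 / 2) := by
  have hτs0 : ∀ m, 1 ≤ m → τs m = 0 := fun m hm => threshold_zStar_eq (hτs m hm)
  have hr : ∀ m, 1 ≤ m → ∑ j, sparsemaxTerm (τs m) (zStar m j) * vStar m j = Real.sqrt (1 / 2) :=
    fun m hm => by norm_num [hτs0 m hm, sum_sparsemaxTerm_zStar_mul_vStar]
  have hτ_lim : Tendsto τ atTop (𝓝 0) :=
    tendsto_neg_one_div_two_mul_succ.congr' <| (eventually_ge_atTop 1).mono
      fun m hm => (threshold_zVec_eq (hτ m hm)).symm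
  refine ⟨fun m hm j => ?_, hr, fun m hm j => ?_, ?_, by positivity⟩
  · rw [hτs0 m hm, sparsemaxTerm_zero_of_nonneg (zStar_nonneg m j), zStar_apply]
  · exact sparsemaxTerm_pos_of_lt ((threshold_zVec_neg (hτ m hm)).trans_le (zVec_nonneg m j))
  · refine (tendsto_abs_max_half_sub_mul_sqrt_half_sub hτ_lim).congr' <|
      (eventually_ge_atTop 1).mono fun m hm => ?_
    beta_reduce
    rw [sum_sparsemaxTerm_zVec_mul_vVec, hr m hm]
end

section
/- Let α > 1 and z ∈ ℝⁿ, with threshold τ = τ(z). Let i, j be indices with z_i > z_j such that both α-entmax(z)_i > 0 and α-entmax(z)_j > 0, and set Δ = z_i − z_j and b = z_j − τ/(α−1) > 0. Then the α-entmax probability ratio satisfies α-entmax(z)_j / α-entmax(z)_i = (b/(b+Δ))^{1/(α−1)}, and this ratio is greater than (respectively equal to, less than) the corresponding softmax ratio e^{−Δ} if and only if b is greater than (respectively equal to, less than) Δ/(e^{(α−1)Δ} − 1). -/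
open Real Set

theorem entmaxTerm_pos_iff {α τ x : ℝ} (hα : 1 < α) :
    0 < entmaxTerm α τ x ↔ τ / (α - 1) < x := by
  have hc : 0 < α - 1 := sub_pos.2 hα
  rw [div_lt_iff₀' hc, ← sub_pos (b := τ), entmaxTerm]
  constructor
  · intro h
    by_contra! hle
    rw [max_eq_right hle, zero_rpow (one_div_pos.2 hc).ne'] at h
    exact h.false
  · intro h
    exact rpow_pos_of_pos (lt_max_of_lt_left h) _

theorem entmaxTerm_eq_of_lt {α τ x : ℝ} (hα : 1 < α) (hx : τ / (α - 1) < x) :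
    entmaxTerm α τ x = ((α - 1) * (x - τ / (α - 1))) ^ ((1 : ℝ) / (α - 1)) := by
  have hc : α - 1 ≠ 0 := (sub_pos.2 hα).ne'
  have hpos : 0 < (α - 1) * x - τ := by
    rwa [div_lt_iff₀' (sub_pos.2 hα), ← sub_pos] at hx
  rw [entmaxTerm, max_eq_left hpos.le, mul_sub, mul_div_cancel₀ _ hc]

theorem entmaxTerm_div_entmaxTerm {α τ x y : ℝ} (hα : 1 < α)
    (hx : τ / (α - 1) < x) (hy : τ / (α - 1) < y) :
    entmaxTerm α τ y / entmaxTerm α τ x =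
      ((y - τ / (α - 1)) / (x - τ / (α - 1))) ^ ((1 : ℝ) / (α - 1)) := by
  have hc : 0 < α - 1 := sub_pos.2 hα
  rw [entmaxTerm_eq_of_lt hα hx, entmaxTerm_eq_of_lt hα hy,
    ← div_rpow (mul_pos hc (sub_pos.2 hy)).le (mul_pos hc (sub_pos.2 hx)).le, mul_div_mul_left _ _ hc.ne']

theorem strictMonoOn_rpow_div_add {Δ p : ℝ} (hΔ : 0 < Δ) (hp : 0 < p) :
    StrictMonoOn (fun b : ℝ ↦ (b / (b + Δ)) ^ p) (Ioi 0) := by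
  intro b (hb : 0 < b) b' (hb' : 0 < b') hbb'
  have hfrac : b / (b + Δ) < b' / (b' + Δ) := by
    rw [div_lt_div_iff₀ (by linarith) (by linarith)]
    nlinarith
  exact rpow_lt_rpow (by positivity) hfrac hp

theorem rpow_div_add_eq_exp_neg {c Δ : ℝ} (hc : c ≠ 0) (hΔ : Δ ≠ 0) :
    (Δ / (exp (c * Δ) - 1) / (Δ / (exp (c * Δ) - 1) + Δ)) ^ (1 / c) = exp (-Δ) := by
  have hu : exp (c * Δ) - 1 ≠ 0 := sub_ne_zero.2 ((exp_eq_one_iff _).not.2 (mul_ne_zero hc hΔ))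
  have hfrac : Δ / (exp (c * Δ) - 1) / (Δ / (exp (c * Δ) - 1) + Δ) = exp (-c * Δ) := by
    have hsum : Δ / (exp (c * Δ) - 1) + Δ = Δ * exp (c * Δ) / (exp (c * Δ) - 1) := by
      rw [div_add' _ _ _ hu]
      ring
    rw [hsum, div_div_div_cancel_right₀ hu, neg_mul, exp_neg, div_mul_cancel_left₀ hΔ]
  rw [hfrac, ← exp_mul]
  field_simp

theorem entmax_vs_softmax_ratio_general
    (α : ℝ) (hα : 1 < α) (n : ℕ) (z : Fin n → ℝ) (τ : ℝ)
    (i j : Fin n) (hij : z j < z i)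
    (hpj : 0 < entmaxTerm α τ (z j)) :
    0 < z j - τ / (α - 1) ∧
    entmaxTerm α τ (z j) / entmaxTerm α τ (z i) =
      ((z j - τ / (α - 1)) / ((z j - τ / (α - 1)) + (z i - z j))) ^ ((1 : ℝ) / (α - 1)) ∧
    (Real.exp (-(z i - z j)) < entmaxTerm α τ (z j) / entmaxTerm α τ (z i) ↔
      (z i - z j) / (Real.exp ((α - 1) * (z i - z j)) - 1) < z j - τ / (α - 1)) ∧
    (entmaxTerm α τ (z j) / entmaxTerm α τ (z i) = Real.exp (-(z i - z j)) ↔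
      z j - τ / (α - 1) = (z i - z j) / (Real.exp ((α - 1) * (z i - z j)) - 1)) ∧
    (entmaxTerm α τ (z j) / entmaxTerm α τ (z i) < Real.exp (-(z i - z j)) ↔
      z j - τ / (α - 1) < (z i - z j) / (Real.exp ((α - 1) * (z i - z j)) - 1)) := by
  have hc : 0 < α - 1 := sub_pos.2 hα
  have hΔ : 0 < z i - z j := sub_pos.2 hij
  have hj : τ / (α - 1) < z j := (entmaxTerm_pos_iff hα).1 hpj
  have hb : 0 < z j - τ / (α - 1) := sub_pos.2 hj
  have hratio : entmaxTerm α τ (z j) / entmaxTerm α τ (z i) =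
      ((z j - τ / (α - 1)) / ((z j - τ / (α - 1)) + (z i - z j))) ^ ((1 : ℝ) / (α - 1)) := by
    rw [entmaxTerm_div_entmaxTerm hα (hj.trans hij) hj, sub_add_sub_cancel']
  have hb₀ : 0 < (z i - z j) / (exp ((α - 1) * (z i - z j)) - 1) :=
    div_pos hΔ (sub_pos.2 (one_lt_exp_iff.2 (mul_pos hc hΔ)))
  have hmono := strictMonoOn_rpow_div_add hΔ (one_div_pos.2 hc)
  rw [hratio, ← rpow_div_add_eq_exp_neg hc.ne' hΔ.ne']
  exact ⟨hb, rfl, hmono.lt_iff_lt hb₀ hb, hmono.injOn.eq_iff hb hb₀, hmono.lt_iff_lt hb hb₀⟩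

/-- Ratio of `α`-entmax probabilities of two in-support coordinates versus the softmax
ratio. With `Δ = z_i − z_j` and `b = z_j − τ/(α−1)`, we have `b > 0`, the entmax ratio
equals `(b/(b+Δ))^{1/(α−1)}`, and it is greater than (resp. equal to, less than) the
softmax ratio `e^{−Δ}` if and only if `b` is greater than (resp. equal to, less than)
`Δ/(e^{(α−1)Δ} − 1)`. The threshold `τ` is characterized by the normalization. -/
theorem entmax_vs_softmax_ratio
    (α : ℝ) (hα : 1 < α) (n : ℕ) (z : Fin n → ℝ) (τ : ℝ)
    (hτ : ∑ i, entmaxTerm α τ (z i) = 1)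
    (i j : Fin n) (hij : z j < z i)
    (hpi : 0 < entmaxTerm α τ (z i)) (hpj : 0 < entmaxTerm α τ (z j)) :
    0 < z j - τ / (α - 1) ∧
    entmaxTerm α τ (z j) / entmaxTerm α τ (z i) =
      ((z j - τ / (α - 1)) / ((z j - τ / (α - 1)) + (z i - z j))) ^ ((1 : ℝ) / (α - 1)) ∧
    (Real.exp (-(z i - z j)) < entmaxTerm α τ (z j) / entmaxTerm α τ (z i) ↔
      (z i - z j) / (Real.exp ((α - 1) * (z i - z j)) - 1) < z j - τ / (α - 1)) ∧
    (entmaxTerm α τ (z j) / entmaxTerm α τ (z i) = Real.exp (-(z i - z j)) ↔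
      z j - τ / (α - 1) = (z i - z j) / (Real.exp ((α - 1) * (z i - z j)) - 1)) ∧
    (entmaxTerm α τ (z j) / entmaxTerm α τ (z i) < Real.exp (-(z i - z j)) ↔
      z j - τ / (α - 1) < (z i - z j) / (Real.exp ((α - 1) * (z i - z j)) - 1)) :=
  entmax_vs_softmax_ratio_general α hα n z τ i j hij hpj
end
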